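/- Let a > 0, e < 1 and c be real, let 0 < v < 1 and s > 1-v. Then ∫_0^{1-v} u^{a-1} (s-u)^{c-1} (1-v-u)^{-e} du = B(a, 1-e) · s^{c-1} (1-v)^{a-e} · ₂F₁(a, 1-c; a-e+1; (1-v)/s). -/

import Mathlib

/-! Substituting `u = (1 - v) t` turns the integral into Euler's integral
`∫₀¹ t^(a-1) (1 - x t)^(c-1) (1 - t)^(b-1) dt` with `x = (1 - v)/s ∈ (0, 1)` and `b = 1 - e`.
Expanding `(1 - x t)^(c-1)` in its binomial series and integrating term by term gives
`Σ (1-c)_k x^k / k! · B(a + k, b)`, and `B(a + k, b) = B(a, b) (a)_k / (a + b)_k`.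
Term-by-term integration is justified since `B(a + k, b) ≤ B(a, b)`, so the integrals of the
absolute values are dominated by the binomial series of `|x| < 1`, which converges absolutely. -/

open Real intervalIntegral

/-- The Pochhammer symbol `(a)_k = a(a+1)⋯(a+k-1) = Γ(a+k)/Γ(a)`. -/
noncomputable def poch (a : ℝ) (k : ℕ) : ℝ := ∏ i ∈ Finset.range k, (a + (i : ℝ))

/-- The Beta function `B(x,y) = Γ(x)Γ(y)/Γ(x+y)`. -/
noncomputable def Beta2 (x y : ℝ) : ℝ := Real.Gamma x * Real.Gamma y / Real.Gamma (x + y)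

/-- Extended Beta function `B(x,y,z) = Γ(x)Γ(y)Γ(z)/Γ(x+y+z)`. -/
noncomputable def Beta3 (x y z : ℝ) : ℝ :=
  Real.Gamma x * Real.Gamma y * Real.Gamma z / Real.Gamma (x + y + z)

/-- The Gauss hypergeometric series `₂F₁(a,b;c;z) = Σ_k (a)_k(b)_k/((c)_k k!) zᵏ`. -/
noncomputable def hyp2F1 (a b c z : ℝ) : ℝ :=
  ∑' k : ℕ, poch a k * poch b k / (poch c k * (Nat.factorial k : ℝ)) * z ^ k

open MeasureTheory Set
open scoped Nat

lemma poch_succ (a : ℝ) (k : ℕ) : poch a (k + 1) = poch a k * (a + k) :=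
  Finset.prod_range_succ _ _

lemma poch_pos {a : ℝ} (ha : 0 < a) (k : ℕ) : 0 < poch a k :=
  Finset.prod_pos fun i _ => by positivity

lemma poch_le_poch {a b : ℝ} (ha : 0 < a) (hab : a ≤ b) (k : ℕ) : poch a k ≤ poch b k :=
  Finset.prod_le_prod (fun i _ => by positivity) fun i _ => by linarith

lemma Gamma_add_nat_eq_mul_poch {a : ℝ} (ha : 0 < a) (k : ℕ) :
    Gamma (a + k) = Gamma a * poch a k := by
  induction k with
  | zero => simp [poch]
  | succ k ih =>
    rw [Nat.cast_succ, ← add_assoc, Gamma_add_one (by positivity), ih, poch_succ]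
    ring

lemma ringChoose_eq_poch_neg (r : ℝ) (k : ℕ) :
    Ring.choose r k = (-1) ^ k * poch (-r) k / k ! := by
  have h : ∏ j ∈ Finset.range k, (r - j) = (-1) ^ k * poch (-r) k := by
    calc ∏ j ∈ Finset.range k, (r - j) = ∏ j ∈ Finset.range k, -(-r + j) :=
          Finset.prod_congr rfl fun j _ => by ring
      _ = (-1) ^ k * poch (-r) k := by rw [Finset.prod_neg, Finset.card_range, poch]
  rw [Ring.choose_eq_smul, ← Polynomial.aeval_eq_smeval, Polynomial.aeval_def,
    Polynomial.eval₂_eq_eval_map, descPochhammer_map, descPochhammer_eval_eq_prod_range, h,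
    smul_eq_mul, inv_mul_eq_div]

theorem hasSum_poch_neg_div_factorial_mul_pow (r : ℝ) {y : ℝ} (hy : |y| < 1) :
    HasSum (fun k : ℕ => poch (-r) k / k ! * y ^ k) ((1 - y) ^ r) := by
  have h := Real.one_add_rpow_hasFPowerSeriesOnBall_zero (a := r) |>.hasSum
    (y := -y) (by simpa [Metric.mem_eball, enorm_eq_nnnorm, ← NNReal.coe_lt_one] using hy)
  rw [zero_add, ← sub_eq_add_neg] at h
  have hterm (k : ℕ) : binomialSeries ℝ r k (fun _ => -y) = poch (-r) k / k ! * y ^ k := by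
    have h1 : ((-1 : ℝ)) ^ k * (-1) ^ k = 1 := by rw [← mul_pow]; norm_num
    rw [binomialSeries_apply, List.prod_ofFn, Fin.prod_const,
      smul_eq_mul, ringChoose_eq_poch_neg, neg_eq_neg_one_mul y, mul_pow]
    linear_combination (poch (-r) k / k ! * y ^ k) * h1
  simpa only [hterm] using h

theorem summable_abs_poch_div_factorial_mul_pow (m : ℝ) {ρ : ℝ} (h0 : 0 ≤ ρ) (h1 : ρ < 1) :
    Summable (fun k : ℕ => |poch m k| / k ! * ρ ^ k) := by
  have h := (binomialSeries ℝ (-m)).summable_norm_mul_pow (r := ρ.toNNReal)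
    (lt_of_lt_of_le (by simpa using h1) binomialSeries_radius_ge_one)
  convert h using 2 with k
  simp [binomialSeries, ringChoose_eq_poch_neg, h0]

lemma ofReal_rpow_mul_one_sub_rpow {p q t : ℝ} (ht : t ∈ Icc (0 : ℝ) 1) :
    ((t ^ (p - 1) * (1 - t) ^ (q - 1) : ℝ) : ℂ) =
      (t : ℂ) ^ ((p : ℂ) - 1) * (1 - (t : ℂ)) ^ ((q : ℂ) - 1) := by
  push_cast [Complex.ofReal_cpow ht.1, Complex.ofReal_cpow (sub_nonneg.2 ht.2)]
  rfl

lemma intervalIntegrable_rpow_mul_one_sub_rpow {p q : ℝ} (hp : 0 < p) (hq : 0 < q) :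
    IntervalIntegrable (fun t : ℝ => t ^ (p - 1) * (1 - t) ^ (q - 1)) volume 0 1 := by
  have h := Complex.betaIntegral_convergent (u := p) (v := q) (by simpa) (by simpa)
  refine (intervalIntegrable_congr fun t ht => ?_).1
    (⟨h.1.re, h.2.re⟩ : IntervalIntegrable _ _ _ _)
  rw [uIoc_of_le zero_le_one] at ht
  simp only [RCLike.re_to_complex, ← ofReal_rpow_mul_one_sub_rpow (Ioc_subset_Icc_self ht),
    Complex.ofReal_re]

theorem integral_rpow_mul_one_sub_rpow {p q : ℝ} (hp : 0 < p) (hq : 0 < q) :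
    ∫ t in (0 : ℝ)..1, t ^ (p - 1) * (1 - t) ^ (q - 1) = Beta2 p q := by
  have hcongr : EqOn (fun t : ℝ => ((t ^ (p - 1) * (1 - t) ^ (q - 1) : ℝ) : ℂ))
      (fun t : ℝ => (t : ℂ) ^ ((p : ℂ) - 1) * (1 - (t : ℂ)) ^ ((q : ℂ) - 1)) (uIcc 0 1) :=
    fun t ht => ofReal_rpow_mul_one_sub_rpow (by rwa [uIcc_of_le zero_le_one] at ht)
  rw [Beta2, ← ProbabilityTheory.beta, ProbabilityTheory.beta_eq_betaIntegralReal p q hp hq,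
    Complex.betaIntegral, ← intervalIntegral.integral_congr hcongr,
    intervalIntegral.integral_ofReal, Complex.ofReal_re]

lemma Beta2_pos {p q : ℝ} (hp : 0 < p) (hq : 0 < q) : 0 < Beta2 p q :=
  ProbabilityTheory.beta_pos hp hq

lemma Beta2_add_nat {p q : ℝ} (hp : 0 < p) (hq : 0 < q) (k : ℕ) :
    Beta2 (p + k) q = Beta2 p q * poch p k / poch (p + q) k := by
  have hpq : 0 < p + q := add_pos hp hq
  have h := (Gamma_pos_of_pos hpq).ne'
  have h' := (poch_pos hpq k).ne'
  rw [Beta2, Beta2, add_right_comm, Gamma_add_nat_eq_mul_poch hp, Gamma_add_nat_eq_mul_poch hpq]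
  field_simp

lemma Beta2_add_nat_le {p q : ℝ} (hp : 0 < p) (hq : 0 < q) (k : ℕ) :
    Beta2 (p + k) q ≤ Beta2 p q := by
  rw [Beta2_add_nat hp hq, mul_div_assoc]
  refine mul_le_of_le_one_right (Beta2_pos hp hq).le ?_
  exact div_le_one_of_le₀ (poch_le_poch hp (by linarith) k) (poch_pos (by linarith) k).le

section EulerIntegral

variable {a b c x : ℝ}

lemma hasSum_euler_integrand (hx : |x| < 1) {t : ℝ} (ht : t ∈ Ioc (0 : ℝ) 1) :
    HasSum (fun k : ℕ => poch (1 - c) k / k ! * x ^ k * (t ^ (a + k - 1) * (1 - t) ^ (b - 1)))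
      (t ^ (a - 1) * (1 - x * t) ^ (c - 1) * (1 - t) ^ (b - 1)) := by
  have hxt : |x * t| < 1 := by
    rw [abs_mul, abs_of_pos ht.1]
    nlinarith [abs_nonneg x, ht.1, ht.2]
  have h := (hasSum_poch_neg_div_factorial_mul_pow (c - 1) hxt).mul_right
    (t ^ (a - 1) * (1 - t) ^ (b - 1))
  have hterm (k : ℕ) : poch (-(c - 1)) k / k ! * (x * t) ^ k * (t ^ (a - 1) * (1 - t) ^ (b - 1)) =
      poch (1 - c) k / k ! * x ^ k * (t ^ (a + k - 1) * (1 - t) ^ (b - 1)) := by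
    rw [neg_sub, add_sub_right_comm, rpow_add ht.1, rpow_natCast, mul_pow]
    ring
  rw [show t ^ (a - 1) * (1 - x * t) ^ (c - 1) * (1 - t) ^ (b - 1) =
    (1 - x * t) ^ (c - 1) * (t ^ (a - 1) * (1 - t) ^ (b - 1)) by ring]
  simpa only [hterm] using h

theorem integral_euler_eq_Beta2_mul_hyp2F1 (ha : 0 < a) (hb : 0 < b) (hx : |x| < 1) :
    ∫ t in (0 : ℝ)..1, t ^ (a - 1) * (1 - x * t) ^ (c - 1) * (1 - t) ^ (b - 1) =
      Beta2 a b * hyp2F1 a (1 - c) (a + b) x := by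
  set β : ℝ → ℝ → ℝ := fun p t => t ^ (p - 1) * (1 - t) ^ (b - 1)
  set coeff : ℕ → ℝ := fun k => poch (1 - c) k / k ! * x ^ k with hcoeff
  have hβ_nonneg (p : ℝ) {t : ℝ} (ht : t ∈ Ioc (0 : ℝ) 1) : 0 ≤ β p t :=
    mul_nonneg (rpow_nonneg ht.1.le _) (rpow_nonneg (sub_nonneg.2 ht.2) _)
  have hβ_int (k : ℕ) : IntegrableOn (β (a + k)) (Ioc 0 1) :=
    (intervalIntegrable_rpow_mul_one_sub_rpow (by positivity) hb).1
  have hβ_integral (k : ℕ) : ∫ t in Ioc (0 : ℝ) 1, β (a + k) t = Beta2 (a + k) b := by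
    rw [← intervalIntegral.integral_of_le zero_le_one,
      integral_rpow_mul_one_sub_rpow (by positivity) hb]
  have hint (k : ℕ) : IntegrableOn (fun t => coeff k * β (a + k) t) (Ioc 0 1) :=
    (hβ_int k).const_mul _
  have hnorm (k : ℕ) :
      ∫ t in Ioc (0 : ℝ) 1, ‖coeff k * β (a + k) t‖ = |coeff k| * Beta2 (a + k) b := by
    rw [← hβ_integral, ← MeasureTheory.integral_const_mul]
    refine setIntegral_congr_fun measurableSet_Ioc fun t ht => ?_
    rw [norm_mul, Real.norm_eq_abs, Real.norm_eq_abs, abs_of_nonneg (hβ_nonneg _ ht)]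
  have hsum : Summable fun k => ∫ t in Ioc (0 : ℝ) 1, ‖coeff k * β (a + k) t‖ := by
    refine .of_nonneg_of_le (fun k => integral_nonneg fun _ => norm_nonneg _) (fun k => ?_)
      ((summable_abs_poch_div_factorial_mul_pow (1 - c) (abs_nonneg x) hx).mul_right (Beta2 a b))
    rw [hnorm, hcoeff, abs_mul, abs_div, abs_pow, Nat.abs_cast]
    exact mul_le_mul_of_nonneg_left (Beta2_add_nat_le ha hb k) (by positivity)
  calc ∫ t in (0 : ℝ)..1, t ^ (a - 1) * (1 - x * t) ^ (c - 1) * (1 - t) ^ (b - 1)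
      = ∫ t in Ioc (0 : ℝ) 1, ∑' k, coeff k * β (a + k) t := by
        rw [intervalIntegral.integral_of_le zero_le_one]
        exact setIntegral_congr_fun measurableSet_Ioc fun t ht =>
          (hasSum_euler_integrand hx ht).tsum_eq.symm
    _ = ∑' k, coeff k * Beta2 (a + k) b := by
        rw [← integral_tsum_of_summable_integral_norm hint hsum]
        simp only [MeasureTheory.integral_const_mul, hβ_integral]
    _ = Beta2 a b * hyp2F1 a (1 - c) (a + b) x := by
        rw [hyp2F1, ← tsum_mul_left]
        refine tsum_congr fun k => ?_
        have := (poch_pos (add_pos ha hb) k).ne'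
        rw [hcoeff, Beta2_add_nat ha hb]
        field_simp

end EulerIntegral

theorem integral_euler_scaled_eq_Beta2_mul_hyp2F1 {a b c w s : ℝ} (ha : 0 < a) (hb : 0 < b)
    (hw : 0 < w) (hws : w < s) :
    ∫ u in (0 : ℝ)..w, u ^ (a - 1) * (s - u) ^ (c - 1) * (w - u) ^ (b - 1) =
      Beta2 a b * s ^ (c - 1) * w ^ (a + b - 1) * hyp2F1 a (1 - c) (a + b) (w / s) := by
  have hs : 0 < s := hw.trans hws
  have hx : |w / s| < 1 := by rw [abs_of_pos (by positivity)]; exact (div_lt_one hs).2 hws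
  have hscale := intervalIntegral.smul_integral_comp_mul_left (a := 0) (b := 1)
    (fun u => u ^ (a - 1) * (s - u) ^ (c - 1) * (w - u) ^ (b - 1)) w
  rw [mul_zero, mul_one, smul_eq_mul] at hscale
  have hcongr : EqOn (fun t => (w * t) ^ (a - 1) * (s - w * t) ^ (c - 1) * (w - w * t) ^ (b - 1))
      (fun t => (w ^ (a - 1) * s ^ (c - 1) * w ^ (b - 1)) *
        (t ^ (a - 1) * (1 - w / s * t) ^ (c - 1) * (1 - t) ^ (b - 1))) (uIcc 0 1) := by
    intro t ht
    rw [uIcc_of_le zero_le_one] at ht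
    dsimp only
    have h1 : 0 ≤ 1 - w / s * t := by
      nlinarith [mul_le_of_le_one_right (div_pos hw hs).le ht.2, (div_lt_one hs).2 hws]
    rw [show s - w * t = s * (1 - w / s * t) by field_simp, show w - w * t = w * (1 - t) by ring,
      mul_rpow hw.le ht.1, mul_rpow hs.le h1, mul_rpow hw.le (sub_nonneg.2 ht.2)]
    ring
  have hpow : w * (w ^ (a - 1) * w ^ (b - 1)) = w ^ (a + b - 1) := by
    rw [show a + b - 1 = 1 + (a - 1) + (b - 1) by ring, rpow_add hw, rpow_add hw, rpow_one]
    ring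
  rw [← hscale, intervalIntegral.integral_congr hcongr, intervalIntegral.integral_const_mul,
    integral_euler_eq_Beta2_mul_hyp2F1 ha hb hx, ← hpow]
  ring

theorem stmt14_general (a c e : ℝ) (ha : 0 < a) (he : e < 1)
    (v s : ℝ) (hv1 : v < 1) (hs : 1 - v < s) :
    (∫ u in (0:ℝ)..(1 - v), u ^ (a - 1) * (s - u) ^ (c - 1) * (1 - v - u) ^ (-e))
      = Beta2 a (1 - e) * s ^ (c - 1) * (1 - v) ^ (a - e) *
          hyp2F1 a (1 - c) (a - e + 1) ((1 - v) / s) := by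
  have h := integral_euler_scaled_eq_Beta2_mul_hyp2F1 (c := c) ha (sub_pos.2 he) (sub_pos.2 hv1) hs
  rwa [sub_sub_cancel_left, show a + (1 - e) - 1 = a - e by ring,
    show a + (1 - e) = a - e + 1 by ring] at h

/-- Euler-type evaluation of the inner integral over `[0,1-v]`:
`∫₀^{1-v} u^{a-1}(s-u)^{c-1}(1-v-u)^{-e} du = B(a,1-e) s^{c-1}(1-v)^{a-e}
₂F₁(a,1-c;a-e+1;(1-v)/s)`. -/
theorem stmt14 (a c e : ℝ) (ha : 0 < a) (he : e < 1)
    (v s : ℝ) (hv0 : 0 < v) (hv1 : v < 1) (hs : 1 - v < s) :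
    (∫ u in (0:ℝ)..(1 - v), u ^ (a - 1) * (s - u) ^ (c - 1) * (1 - v - u) ^ (-e))
      = Beta2 a (1 - e) * s ^ (c - 1) * (1 - v) ^ (a - e) *
          hyp2F1 a (1 - c) (a - e + 1) ((1 - v) / s) :=
  stmt14_general a c e ha he v s hv1 hs
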